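/- Let A be a real d×d matrix and λ₁ > 0 a constant with ⟨x, Ax⟩ ≤ −λ₁‖x‖² for all x ∈ ℝ^d. Let f : ℝ^d → ℝ^d and g_j : ℝ^d → ℝ^d (j = 1,…,m) be differentiable, and suppose there exist p₁ ≥ 1 and L₂ ∈ ℝ such that 2⟨x − y, f(x) − f(y)⟩ + (2p₁ − 1)·Σ_{j=1}^m ‖g_j(x) − g_j(y)‖² ≤ L₂‖x − y‖² for all x, y ∈ ℝ^d. Set F(x) := Ax + f(x). Then for all x, y ∈ ℝ^d: 2⟨DF(x)y, y⟩ + (2p₁ − 1)·Σ_{j=1}^m ‖Dg_j(x)y‖² ≤ −(2λ₁ − L₂)‖y‖². -/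

import Mathlib

open scoped RealInnerProductSpace
open Filter Topology

/-!
Apply the monotonicity condition to the points `x + t • y` and `x` and divide by `t ^ 2`:
the difference quotients of `f` and the `g j` in direction `y` satisfy the same inequality,
and letting `t → 0` turns them into the derivatives. The linear part contributes
`2 * ⟪A y, y⟫ ≤ -2 * lam₁ * ‖y‖ ^ 2`.
-/

theorem DifferentiableAt.tendsto_inv_smul_sub {E F : Type*} [NormedAddCommGroup E]
    [NormedSpace ℝ E] [NormedAddCommGroup F] [NormedSpace ℝ F] {h : E → F} {x : E}
    (hh : DifferentiableAt ℝ h x) (y : E) :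
    Tendsto (fun t : ℝ => t⁻¹ • (h (x + t • y) - h x)) (𝓝[≠] 0) (𝓝 (fderiv ℝ h x y)) := by
  have hline : HasDerivAt (fun t : ℝ => x + t • y) y 0 := by
    simpa using ((hasDerivAt_id (0 : ℝ)).smul_const y).const_add x
  have hcomp : HasDerivAt (fun t : ℝ => h (x + t • y)) (fderiv ℝ h x y) 0 := by
    have hh' : HasFDerivAt h (fderiv ℝ h x) (x + (0 : ℝ) • y) := by simpa using hh.hasFDerivAt
    exact hh'.comp_hasDerivAt 0 hline
  refine (hasDerivAt_iff_tendsto_slope.1 hcomp).congr fun t => ?_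
  simp [slope_def_module]

section CoupledMonotone

variable {E G ι : Type*} [NormedAddCommGroup E] [InnerProductSpace ℝ E]
  [NormedAddCommGroup G] [NormedSpace ℝ G] [Fintype ι]

def CoupledMonotone (f : E → E) (g : ι → E → G) (c L : ℝ) : Prop :=
  ∀ x y, 2 * ⟪x - y, f x - f y⟫ + c * ∑ j, ‖g j x - g j y‖ ^ 2 ≤ L * ‖x - y‖ ^ 2

variable {f : E → E} {g : ι → E → G} {c L : ℝ}

theorem CoupledMonotone.inv_smul_sub_le (hmono : CoupledMonotone f g c L) (x y : E) {t : ℝ}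
    (ht : t ≠ 0) :
    2 * ⟪t⁻¹ • (f (x + t • y) - f x), y⟫ + c * ∑ j, ‖t⁻¹ • (g j (x + t • y) - g j x)‖ ^ 2
      ≤ L * ‖y‖ ^ 2 := by
  have h := hmono (x + t • y) x
  simp only [add_sub_cancel_left, real_inner_smul_left, norm_smul, mul_pow, norm_inv,
    Real.norm_eq_abs, inv_pow, sq_abs, ← Finset.mul_sum] at h ⊢
  rw [real_inner_comm]
  field_simp
  rw [div_le_iff₀ (by positivity)]
  linarith

theorem CoupledMonotone.fderiv_le (hmono : CoupledMonotone f g c L) {x : E}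
    (hf : DifferentiableAt ℝ f x) (hg : ∀ j, DifferentiableAt ℝ (g j) x) (y : E) :
    2 * ⟪fderiv ℝ f x y, y⟫ + c * ∑ j, ‖fderiv ℝ (g j) x y‖ ^ 2 ≤ L * ‖y‖ ^ 2 := by
  have hlim_f := ((hf.tendsto_inv_smul_sub y).inner (tendsto_const_nhds (x := y))).const_mul (2 : ℝ)
  have hlim_g := (tendsto_finsetSum Finset.univ fun j _ =>
    ((hg j).tendsto_inv_smul_sub y).norm.pow 2).const_mul c
  refine le_of_tendsto (hlim_f.add hlim_g) ?_
  filter_upwards [self_mem_nhdsWithin] with t ht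
  exact hmono.inv_smul_sub_le x y ht

end CoupledMonotone

theorem stmt_1 {d m : ℕ}
    (A : EuclideanSpace ℝ (Fin d) →L[ℝ] EuclideanSpace ℝ (Fin d))
    (lam₁ : ℝ)
    (hA : ∀ x : EuclideanSpace ℝ (Fin d), ⟪x, A x⟫ ≤ -lam₁ * ‖x‖ ^ 2)
    (f : EuclideanSpace ℝ (Fin d) → EuclideanSpace ℝ (Fin d))
    (g : Fin m → EuclideanSpace ℝ (Fin d) → EuclideanSpace ℝ (Fin d))
    (hf : Differentiable ℝ f) (hg : ∀ j, Differentiable ℝ (g j))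
    (p₁ L₂ : ℝ)
    (hmono : ∀ x y : EuclideanSpace ℝ (Fin d),
      2 * ⟪x - y, f x - f y⟫ + (2 * p₁ - 1) * ∑ j, ‖g j x - g j y‖ ^ 2 ≤ L₂ * ‖x - y‖ ^ 2)
    (F : EuclideanSpace ℝ (Fin d) → EuclideanSpace ℝ (Fin d))
    (hF : ∀ x, F x = A x + f x) :
    ∀ x y : EuclideanSpace ℝ (Fin d),
      2 * ⟪fderiv ℝ F x y, y⟫ + (2 * p₁ - 1) * ∑ j, ‖fderiv ℝ (g j) x y‖ ^ 2
        ≤ -(2 * lam₁ - L₂) * ‖y‖ ^ 2 := by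
  intro x y
  have hDF : fderiv ℝ F x = A + fderiv ℝ f x := by
    rw [funext hF]
    exact (A.hasFDerivAt.add (hf x).hasFDerivAt).fderiv
  have hDf := CoupledMonotone.fderiv_le hmono (hf x) (fun j => hg j x) y
  have hAy : ⟪A y, y⟫ ≤ -lam₁ * ‖y‖ ^ 2 := real_inner_comm y (A y) ▸ hA y
  rw [hDF, add_apply, inner_add_left]
  linarith
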